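/- Each of the five generators x = [a,b], y = [b,c], z = aya, t = cxcy⁻¹x⁻¹, w = ata of the branching subgroup K of IMG(z²+i) has order exactly 4. Consequently K/K' embeds into C₄⁵. -/

import Mathlib

/-- The generator `a = (1,1)σ` of `IMG(z²+i)`, acting on the binary rooted tree
whose vertices are finite binary words. -/
def aF : List Bool → List Bool
  | [] => []
  | x :: s => (!x) :: s

mutual
/-- The generator `b = (a, c)` of `IMG(z²+i)`. -/
def bF : List Bool → List Bool
  | [] => []
  | false :: s => false :: aF s
  | true :: s => true :: cF s
/-- The generator `c = (b, 1)` of `IMG(z²+i)`. -/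
def cF : List Bool → List Bool
  | [] => []
  | false :: s => false :: bF s
  | true :: s => true :: s
end

theorem aF_invol : ∀ s, aF (aF s) = s := by
  intro s; cases s <;> simp [aF]

theorem bcF_invol : ∀ s, bF (bF s) = s ∧ cF (cF s) = s := by
  intro s
  induction s with
  | nil => exact ⟨rfl, rfl⟩
  | cons x s ih =>
    cases x <;> exact ⟨by simp [bF, ih.1, ih.2, aF_invol], by simp [cF, ih.1]⟩

/-- `a` as a tree automorphism. -/
def aE : Equiv.Perm (List Bool) := ⟨aF, aF, aF_invol, aF_invol⟩
/-- `b` as a tree automorphism. -/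
def bE : Equiv.Perm (List Bool) := ⟨bF, bF, fun s => (bcF_invol s).1, fun s => (bcF_invol s).1⟩
/-- `c` as a tree automorphism. -/
def cE : Equiv.Perm (List Bool) := ⟨cF, cF, fun s => (bcF_invol s).2, fun s => (bcF_invol s).2⟩

/-- `G = IMG(z²+i)`, the group generated by `a`, `b`, `c`. -/
def IMG : Subgroup (Equiv.Perm (List Bool)) := Subgroup.closure {aE, bE, cE}

def aG : IMG := ⟨aE, Subgroup.subset_closure (by simp)⟩
def bG : IMG := ⟨bE, Subgroup.subset_closure (by simp)⟩
def cG : IMG := ⟨cE, Subgroup.subset_closure (by simp)⟩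

open scoped commutatorElement

def xG : IMG := ⁅aG, bG⁆
def yG : IMG := ⁅bG, cG⁆
def zG : IMG := aG * yG * aG
def tG : IMG := cG * xG * cG * yG⁻¹ * xG⁻¹
def wG : IMG := aG * tG * aG

/-- `K = ⟨[a,b],[b,c]⟩^G`, the maximal branching subgroup of `IMG(z²+i)`. -/
def Ksub : Subgroup ↥IMG := Subgroup.normalClosure {⁅aG, bG⁆, ⁅bG, cG⁆}

/-!
Everything is decided by the self-similar action on the tree. Since `b` and `c` are
involutions, `(ac)⁴ = (ca)⁴ = 1` hold after reading one letter of a vertex, and then so does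
`(ab)⁸ = 1`; after reading two letters, each relation needed below reduces to these. This gives
`x⁴ = y⁴ = z⁴ = t⁴ = w⁴ = 1` (their squares move an explicit short vertex, so the orders are
exactly `4`) and the action of `a, b, c` by conjugation on `x, y, z, t, w`. Hence
`⟨x, y, z, t, w⟩` is normal in `G`, so it equals `K`, and `K/K'` is a quotient of `C₄⁵`. A
quotient of a finite abelian group embeds into it, because both are isomorphic to their duals.
-/

open Subgroup Function Set

theorem orderOf_eq_four {M : Type*} [Monoid M] {g : M} (h4 : g ^ 4 = 1) (h2 : g ^ 2 ≠ 1) :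
    orderOf g = 4 :=
  orderOf_eq_prime_pow (p := 2) (n := 1) h2 h4

theorem Subgroup.ne_one_of_apply_ne {α : Type*} {H : Subgroup (Equiv.Perm α)} {g : H} (s : α)
    (h : (g : Equiv.Perm α) s ≠ s) : g ≠ 1 := by
  rintro rfl
  exact h rfl

theorem Subgroup.conj_mem_closure {G : Type*} [Group G] {S : Set G} {g : G}
    (hS : ∀ s ∈ S, g * s * g⁻¹ ∈ closure S) {h : G} (hh : h ∈ closure S) :
    g * h * g⁻¹ ∈ closure S :=
  (closure_le ((closure S).comap (MulAut.conj g).toMonoidHom)).2 hS hh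

theorem Subgroup.closure_normal_of_forall_conj_mem {G : Type*} [Group G] {S T : Set G}
    (hT : closure T = ⊤)
    (hconj : ∀ t ∈ T, ∀ s ∈ S, t * s * t⁻¹ ∈ closure S ∧ t⁻¹ * s * t ∈ closure S) :
    (closure S).Normal := by
  rw [← normalizer_eq_top_iff, eq_top_iff, ← hT, closure_le]
  intro t ht
  refine mem_normalizer_iff.2 fun h =>
    ⟨conj_mem_closure fun s hs => (hconj t ht s hs).1, fun hh => ?_⟩
  have := conj_mem_closure (g := t⁻¹) (by simpa using fun s hs => (hconj t ht s hs).2) hh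
  simpa [mul_assoc] using this

theorem Subgroup.closure_range_subtype_eq_top {G ι : Type*} [Group G] {K : Subgroup G}
    {u : ι → G} (hK : K = closure (range u)) (hu : ∀ i, u i ∈ K) :
    closure (range fun i => (⟨u i, hu i⟩ : K)) = ⊤ := by
  subst hK
  convert closure_preimage_eq_top (range u)
  ext ⟨g, hg⟩
  simp [Subtype.ext_iff]

theorem Subgroup.closure_range_comp_eq_top {G H ι : Type*} [Group G] [Group H] {f : G →* H}
    (hf : Surjective f) {v : ι → G} (hv : closure (range v) = ⊤) :
    closure (range (f ∘ v)) = ⊤ := by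
  rw [range_comp, ← MonoidHom.map_closure, hv, map_top_of_surjective f hf]

theorem CommGroup.exists_surjective_of_closure_range_eq_top {G ι : Type*} [CommGroup G]
    [Fintype ι] {n : ℕ} (v : ι → G) (hv : ∀ i, v i ^ n = 1) (hgen : closure (range v) = ⊤) :
    ∃ φ : (ι → Multiplicative (ZMod n)) →* G, Surjective φ := by
  classical
  let ψ : ι → Multiplicative (ZMod n) →* G := fun i => AddMonoidHom.toMultiplicativeLeft
    (ZMod.lift n ⟨zmultiplesHom _ (Additive.ofMul (v i)), by simp [← ofMul_pow, hv i]⟩)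
  have hψ (i) : ψ i (.ofAdd 1) = v i := by
    simp only [ψ, AddMonoidHom.toMultiplicativeLeft_apply_apply, toAdd_ofAdd]
    rw [← Int.cast_one, ZMod.lift_coe]
    simp
  let φ := (Pi.monoidHomMulEquiv (fun _ => Multiplicative (ZMod n)) G).symm ψ
  have hφ (i) : φ (Pi.mulSingle i (.ofAdd 1)) = v i := by
    rw [← hψ]
    exact DFunLike.congr_fun (congrFun ((Pi.monoidHomMulEquiv _ G).apply_symm_apply ψ) i) _
  refine ⟨φ, MonoidHom.range_eq_top.1 (eq_top_iff.2 ?_)⟩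
  rw [← hgen, closure_le]
  rintro _ ⟨i, rfl⟩
  exact ⟨_, hφ i⟩

theorem CommGroup.exists_injective_of_surjective {A B : Type*} [CommGroup A] [CommGroup B]
    [Finite B] (φ : B →* A) (hφ : Surjective φ) : ∃ f : A →* B, Injective f := by
  have : Finite A := .of_surjective φ hφ
  obtain ⟨eA⟩ := CommGroup.monoidHom_mulEquiv_of_hasEnoughRootsOfUnity A ℂ
  obtain ⟨eB⟩ := CommGroup.monoidHom_mulEquiv_of_hasEnoughRootsOfUnity B ℂ
  have hdual : Injective fun χ : A →* ℂˣ => χ.comp φ := fun _ _ h =>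
    (MonoidHom.cancel_right hφ).1 h
  exact ⟨(eB.toMonoidHom.comp (MonoidHom.compHom' φ)).comp eA.symm.toMonoidHom,
    eB.injective.comp (hdual.comp eA.symm.injective)⟩

@[simp] theorem aF_nil : aF [] = [] := rfl
@[simp] theorem bF_nil : bF [] = [] := rfl
@[simp] theorem cF_nil : cF [] = [] := rfl
@[simp] theorem aF_false_cons (s : List Bool) : aF (false :: s) = true :: s := rfl
@[simp] theorem aF_true_cons (s : List Bool) : aF (true :: s) = false :: s := rfl
@[simp] theorem bF_false_cons (s : List Bool) : bF (false :: s) = false :: aF s := rfl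
@[simp] theorem bF_true_cons (s : List Bool) : bF (true :: s) = true :: cF s := rfl
@[simp] theorem cF_false_cons (s : List Bool) : cF (false :: s) = false :: bF s := rfl
@[simp] theorem cF_true_cons (s : List Bool) : cF (true :: s) = true :: s := rfl

attribute [simp] aF_invol

@[simp] theorem bF_bF (s : List Bool) : bF (bF s) = s := (bcF_invol s).1
@[simp] theorem cF_cF (s : List Bool) : cF (cF s) = s := (bcF_invol s).2

@[simp] theorem ac_pow_four_apply (s : List Bool) :
    aF (cF (aF (cF (aF (cF (aF (cF s))))))) = s := by
  rcases s with _ | ⟨_ | _, s⟩ <;> simp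

@[simp] theorem ca_pow_four_apply (s : List Bool) :
    cF (aF (cF (aF (cF (aF (cF (aF s))))))) = s := by
  rcases s with _ | ⟨_ | _, s⟩ <;> simp

@[simp] theorem ab_pow_eight_apply (s : List Bool) :
    aF (bF (aF (bF (aF (bF (aF (bF (aF (bF (aF (bF (aF (bF (aF (bF s))))))))))))))) = s := by
  rcases s with _ | ⟨_ | _, s⟩ <;> simp

@[simp] theorem aG_apply (s : List Bool) : (aG : Equiv.Perm (List Bool)) s = aF s := rfl
@[simp] theorem bG_apply (s : List Bool) : (bG : Equiv.Perm (List Bool)) s = bF s := rfl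
@[simp] theorem cG_apply (s : List Bool) : (cG : Equiv.Perm (List Bool)) s = cF s := rfl
@[simp] theorem aG_inv : aG⁻¹ = aG := rfl
@[simp] theorem bG_inv : bG⁻¹ = bG := rfl
@[simp] theorem cG_inv : cG⁻¹ = cG := rfl

def kGen : Fin 5 → IMG := ![xG, yG, zG, tG, wG]

section Relations

attribute [local simp] xG yG zG tG wG commutatorElement_def

theorem aG_conj : aG * xG * aG = xG⁻¹ ∧ aG * yG * aG = zG ∧ aG * zG * aG = yG ∧
    aG * tG * aG = wG ∧ aG * wG * aG = tG := by
  refine ⟨?_, ?_, ?_, ?_, ?_⟩ <;> ext s : 2 <;>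
    rcases s with _ | ⟨_ | _, _ | ⟨_ | _, s⟩⟩ <;> simp

theorem bG_conj : bG * xG * bG = xG⁻¹ ∧ bG * yG * bG = yG⁻¹ ∧
    bG * zG * bG = xG⁻¹ * zG⁻¹ * xG ∧ bG * tG * bG = xG * tG * xG⁻¹ ∧ bG * wG * bG = wG⁻¹ := by
  refine ⟨?_, ?_, ?_, ?_, ?_⟩ <;> ext s : 2 <;>
    rcases s with _ | ⟨_ | _, _ | ⟨_ | _, s⟩⟩ <;> simp

theorem cG_conj : cG * xG * cG = tG * xG * yG ∧ cG * yG * cG = yG⁻¹ ∧ cG * zG * cG = zG ∧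
    cG * tG * cG = tG⁻¹ ∧ cG * wG * cG = wG := by
  refine ⟨?_, ?_, ?_, ?_, ?_⟩ <;> ext s : 2 <;>
    rcases s with _ | ⟨_ | _, _ | ⟨_ | _, s⟩⟩ <;> simp

theorem kGen_pow_four (i : Fin 5) : kGen i ^ 4 = 1 := by
  fin_cases i <;> ext s : 2 <;>
    rcases s with _ | ⟨_ | _, _ | ⟨_ | _, s⟩⟩ <;> simp [kGen, pow_succ]

end Relations

theorem kGen_sq_ne_one (i : Fin 5) : kGen i ^ 2 ≠ 1 := by
  fin_cases i
  exacts [ne_one_of_apply_ne [false, false, false, false] (by decide),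
    ne_one_of_apply_ne [false, false, false, false, false] (by decide),
    ne_one_of_apply_ne [true, false, false, false, false] (by decide),
    ne_one_of_apply_ne [false, false, false, false, false, false] (by decide),
    ne_one_of_apply_ne [true, false, false, false, false, false] (by decide)]

theorem orderOf_kGen (i : Fin 5) : orderOf (kGen i) = 4 :=
  orderOf_eq_four (kGen_pow_four i) (kGen_sq_ne_one i)

theorem closure_aG_bG_cG_eq_top : closure ({aG, bG, cG} : Set IMG) = ⊤ := by
  have h : ({aG, bG, cG} : Set IMG) = IMG.subtype ⁻¹' {aE, bE, cE} := by
    ext g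
    simp only [mem_insert_iff, mem_singleton_iff, mem_preimage, coe_subtype, Subtype.ext_iff]
    rfl
  rw [h]
  exact closure_preimage_eq_top _

theorem kGen_mem_closure (i : Fin 5) : kGen i ∈ closure (range kGen) :=
  subset_closure (mem_range_self i)

theorem closure_kGen_normal : (closure (range kGen)).Normal := by
  refine closure_normal_of_forall_conj_mem closure_aG_bG_cG_eq_top ?_
  have hmem := kGen_mem_closure
  generalize closure (range kGen) = H at hmem ⊢
  have hx : xG ∈ H := hmem 0
  have hy : yG ∈ H := hmem 1
  have hz : zG ∈ H := hmem 2
  have ht : tG ∈ H := hmem 3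
  have hw : wG ∈ H := hmem 4
  rintro t (rfl | rfl | rfl) _ ⟨i, rfl⟩ <;> fin_cases i <;>
    simp [kGen, aG_conj, bG_conj, cG_conj, mul_mem_cancel_left, hx, hy, hz, ht, hw]

theorem kGen_mem_Ksub (i : Fin 5) : kGen i ∈ Ksub := by
  have hK : Ksub.Normal := normalClosure_normal
  have hx : xG ∈ Ksub := subset_normalClosure (Or.inl rfl)
  have hy : yG ∈ Ksub := subset_normalClosure (Or.inr rfl)
  have hz : zG ∈ Ksub := by simpa [zG] using hK.conj_mem yG hy aG
  have ht : tG ∈ Ksub := by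
    have hcxc : cG * xG * cG ∈ Ksub := by simpa using hK.conj_mem xG hx cG
    exact mul_mem (mul_mem hcxc (inv_mem hy)) (inv_mem hx)
  have hw : wG ∈ Ksub := by simpa [wG] using hK.conj_mem tG ht aG
  fin_cases i
  exacts [hx, hy, hz, ht, hw]

theorem Ksub_eq_closure_kGen : Ksub = closure (range kGen) := by
  have := closure_kGen_normal
  refine le_antisymm (normalClosure_le_normal ?_) ((closure_le _).2 ?_)
  · rintro _ (rfl | rfl)
    exacts [kGen_mem_closure 0, kGen_mem_closure 1]
  · rintro _ ⟨i, rfl⟩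
    exact kGen_mem_Ksub i

/-- Each of the five generators `x, y, z, t, w` of the branching subgroup
`K` of `IMG(z²+i)` has order exactly `4`; consequently the abelianization `K/K'`
embeds into `C₄⁵`. -/
theorem stmt_12 :
    (orderOf xG = 4 ∧ orderOf yG = 4 ∧ orderOf zG = 4 ∧ orderOf tG = 4 ∧ orderOf wG = 4) ∧
    ∃ f : Abelianization ↥Ksub →* (Fin 5 → Multiplicative (ZMod 4)),
      Function.Injective f := by
  refine ⟨⟨orderOf_kGen 0, orderOf_kGen 1, orderOf_kGen 2, orderOf_kGen 3, orderOf_kGen 4⟩, ?_⟩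
  let v : Fin 5 → Abelianization Ksub := fun i => Abelianization.of ⟨kGen i, kGen_mem_Ksub i⟩
  have hv (i) : v i ^ 4 = 1 := by
    rw [← map_pow, ← map_one Abelianization.of]
    exact congrArg _ (Subtype.ext (kGen_pow_four i))
  have hgen : closure (range v) = ⊤ :=
    closure_range_comp_eq_top (fun a => QuotientGroup.mk_surjective a)
      (closure_range_subtype_eq_top Ksub_eq_closure_kGen kGen_mem_Ksub)
  obtain ⟨φ, hφ⟩ := CommGroup.exists_surjective_of_closure_range_eq_top v hv hgen
  exact CommGroup.exists_injective_of_surjective φ hφ
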